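/- Let φ be a propositional formula, H = {h_1,...,h_n} a set of variables of φ, q a variable with q ∉ H, and s, t, f fresh variables. Define Δ = {(h_i ∨ ¬t), (¬h_i ∨ f) : 1 ≤ i ≤ n} ∪ {φ} ∪ {ψ} where ψ = (s ↔ q), and α = (s ∨ ¬t ∨ f). Assume φ is both 0-valid and 1-valid. Then the following are equivalent: (1) there exists a set E of literals over H such that φ ∧ ⋀E is satisfiable and φ ∧ ⋀E ⊨ q; (2) there exists Φ ⊆ Δ with ψ ∈ Φ such that Φ is consistent, Φ ⊨ α, and no proper subset of Φ entails α. -/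

import Mathlib

/-!
The formula `α = s ∨ ¬t ∨ f` fails only when `s` is false, `t` true and `f` false. Under
`t = true, f = false` the clauses `h ∨ ¬t` and `¬h ∨ f` of `Δ` are the literals `h` and `¬h`, and
`ψ = (s ↔ q)` is `¬q` once `s` is false; since `s, t, f` are fresh, any assignment can be changed
on them. Hence `Φ ⊆ Δ` entails `α` iff `ψ ∈ Φ` and the literals of `Φ`, together with `φ` if
`φ ∈ Φ`, entail `q`.
A subset-minimal explanation `E` thus yields the minimal support `{φ, ψ} ∪ clauses(E)`. Conversely,
a minimal support containing `ψ` contains no complementary pair (resolution would give `α`),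
hence contains `φ` (else `q` would be entailed by literals over `H`), and its literals form an
explanation, consistent with `φ` because `Φ ∖ {ψ}` does not entail `α`.
-/

inductive PropForm (α : Type) where
  | var : α → PropForm α
  | tru : PropForm α
  | fls : PropForm α
  | not : PropForm α → PropForm α
  | and : PropForm α → PropForm α → PropForm α
  | or : PropForm α → PropForm α → PropForm α
  deriving DecidableEq

def PropForm.eval {α : Type} (v : α → Bool) : PropForm α → Bool
  | .var a => v a
  | .tru => true
  | .fls => false
  | .not φ => !(PropForm.eval v φ)
  | .and φ ψ => PropForm.eval v φ && PropForm.eval v ψ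
  | .or φ ψ => PropForm.eval v φ || PropForm.eval v ψ

def Models {α : Type} (Φ : Set (PropForm α)) (v : α → Bool) : Prop :=
  ∀ φ ∈ Φ, PropForm.eval v φ = true

def Entails {α : Type} (Φ : Set (PropForm α)) (ψ : PropForm α) : Prop :=
  ∀ v : α → Bool, Models Φ v → PropForm.eval v ψ = true

def Consistent {α : Type} (Φ : Set (PropForm α)) : Prop :=
  ∃ v : α → Bool, Models Φ v

def bigAnd {α : Type} (L : List (PropForm α)) : PropForm α :=
  L.foldr PropForm.and PropForm.tru

def varsOf : PropForm ℕ → Finset ℕ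
  | .var a => {a}
  | .tru => ∅
  | .fls => ∅
  | .not φ => varsOf φ
  | .and φ ψ => varsOf φ ∪ varsOf ψ
  | .or φ ψ => varsOf φ ∪ varsOf ψ

namespace PropForm

def iff {α : Type} (a b : PropForm α) : PropForm α :=
  .or (.and a b) (.and (.not a) (.not b))

@[simp] lemma eval_iff {α : Type} (v : α → Bool) (a b : PropForm α) :
    (a.iff b).eval v = true ↔ a.eval v = b.eval v := by
  cases ha : a.eval v <;> cases hb : b.eval v <;> simp [iff, eval, ha, hb]

lemma eval_congr {v w : ℕ → Bool} {φ : PropForm ℕ} (h : ∀ x ∈ varsOf φ, v x = w x) :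
    φ.eval v = φ.eval w := by
  induction φ with
  | var a => exact h a (Finset.mem_singleton_self a)
  | tru | fls => rfl
  | not φ ih => simp only [eval, ih h]
  | and φ ψ ihφ ihψ | or φ ψ ihφ ihψ =>
    simp only [varsOf, Finset.mem_union] at h
    simp only [eval, ihφ fun x hx => h x (.inl hx), ihψ fun x hx => h x (.inr hx)]

end PropForm

namespace AbductionToRelevance

open Function (update Injective)
open PropForm (var)

def clause (t f : ℕ) : ℕ × Bool → PropForm ℕ
  | (h, true) => .or (.var h) (.not (.var t))
  | (h, false) => .or (.not (.var h)) (.var f)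

def delta (φ : PropForm ℕ) (H : Finset ℕ) (s q t f : ℕ) : Set (PropForm ℕ) :=
  {χ | ∃ h ∈ H, χ = .or (.var h) (.not (.var t))} ∪ {χ | ∃ h ∈ H, χ = .or (.not (.var h)) (.var f)}
    ∪ {φ, (var s).iff (var q)}

def alpha (s t f : ℕ) : PropForm ℕ := .or (.var s) (.or (.not (.var t)) (.var f))

structure Fresh (φ : PropForm ℕ) (H : Finset ℕ) (q s t f : ℕ) : Prop where
  s_notMem_varsOf : s ∉ varsOf φ
  t_notMem_varsOf : t ∉ varsOf φ
  f_notMem_varsOf : f ∉ varsOf φ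
  s_notMem_H : s ∉ H
  t_notMem_H : t ∉ H
  f_notMem_H : f ∉ H
  s_ne_t : s ≠ t
  s_ne_f : s ≠ f
  t_ne_f : t ≠ f
  s_ne_q : s ≠ q
  t_ne_q : t ≠ q
  f_ne_q : f ≠ q

def pinGuards (s t f : ℕ) (b : Bool) (v : ℕ → Bool) : ℕ → Bool :=
  update (update (update v f false) t true) s b

variable {φ : PropForm ℕ} {H : Finset ℕ} {q s t f : ℕ}

lemma clause_injective : Injective (clause t f) := by
  rintro ⟨h, _ | _⟩ ⟨h', _ | _⟩ <;> simp [clause]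

lemma eval_clause_iff {w : ℕ → Bool} (ht : w t = true) (hf : w f = false) (l : ℕ × Bool) :
    (clause t f l).eval w = true ↔ w l.1 = l.2 := by
  obtain ⟨h, _ | _⟩ := l <;> simp [clause, PropForm.eval, ht, hf]

lemma mem_delta {χ : PropForm ℕ} :
    χ ∈ delta φ H s q t f ↔
      χ = φ ∨ χ = (var s).iff (var q) ∨ ∃ l : ℕ × Bool, l.1 ∈ H ∧ χ = clause t f l := by
  simp only [delta, Set.mem_union, Set.mem_ofPred_eq, Set.mem_insert_iff, Set.mem_singleton_iff,
    Prod.exists, Bool.exists_bool, clause, exists_or, or_assoc, or_comm]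

lemma clause_ne_of_notMem_varsOf (ht : t ∉ varsOf φ) (hf : f ∉ varsOf φ) (l : ℕ × Bool) :
    clause t f l ≠ φ := by
  rintro rfl
  obtain ⟨h, _ | _⟩ := l <;> simp [clause, varsOf] at ht hf

lemma clause_ne_iff (l : ℕ × Bool) (a b : PropForm ℕ) : clause t f l ≠ a.iff b := by
  obtain ⟨h, _ | _⟩ := l <;> simp [clause, PropForm.iff]

lemma fst_mem_of_clause_mem_delta (ht : t ∉ varsOf φ) (hf : f ∉ varsOf φ) {l : ℕ × Bool}
    (hl : clause t f l ∈ delta φ H s q t f) : l.1 ∈ H := by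
  rcases mem_delta.1 hl with h | h | ⟨l', hl', h⟩
  · exact absurd h (clause_ne_of_notMem_varsOf ht hf l)
  · exact absurd h (clause_ne_iff l _ _)
  · exact clause_injective h ▸ hl'

lemma models_iff_of_subset_delta {Φ : Set (PropForm ℕ)} (hΦ : Φ ⊆ delta φ H s q t f)
    (w : ℕ → Bool) :
    Models Φ w ↔ (φ ∈ Φ → φ.eval w = true) ∧ ((var s).iff (var q) ∈ Φ → w s = w q) ∧
      ∀ l ∈ clause t f ⁻¹' Φ, (clause t f l).eval w = true := by
  refine ⟨fun hw => ⟨hw φ, fun hψ => by simpa [PropForm.eval] using hw _ hψ, fun _ hl => hw _ hl⟩,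
    ?_⟩
  rintro ⟨hφ, hψ, hcl⟩ χ hχ
  rcases mem_delta.1 (hΦ hχ) with rfl | rfl | ⟨l, -, rfl⟩
  exacts [hφ hχ, by simpa [PropForm.eval] using hψ hχ, hcl l hχ]

section pinGuards

variable {b : Bool} {v : ℕ → Bool}

lemma pinGuards_apply_of_ne {x : ℕ} (hs : x ≠ s) (ht : x ≠ t) (hf : x ≠ f) :
    pinGuards s t f b v x = v x := by
  simp [pinGuards, hs, ht, hf]

lemma pinGuards_apply_s : pinGuards s t f b v s = b := by simp [pinGuards]

lemma pinGuards_apply_t (hst : s ≠ t) : pinGuards s t f b v t = true := by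
  simp [pinGuards, hst.symm]

lemma pinGuards_apply_f (hsf : s ≠ f) (htf : t ≠ f) : pinGuards s t f b v f = false := by
  simp [pinGuards, hsf.symm, htf.symm]

lemma eval_pinGuards_alpha (hst : s ≠ t) (hsf : s ≠ f) (htf : t ≠ f) :
    (alpha s t f).eval (pinGuards s t f b v) = b := by
  simp [alpha, PropForm.eval, pinGuards_apply_s, pinGuards_apply_t hst, pinGuards_apply_f hsf htf]

lemma pinGuards_eq_self (hs : v s = b) (ht : v t = true) (hf : v f = false) :
    pinGuards s t f b v = v := by
  rw [pinGuards, ← hf, Function.update_eq_self, ← ht, Function.update_eq_self, ← hs,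
    Function.update_eq_self]

lemma Fresh.pinGuards_apply_of_mem_varsOf (hg : Fresh φ H q s t f) {x : ℕ} (hx : x ∈ varsOf φ) :
    pinGuards s t f b v x = v x :=
  pinGuards_apply_of_ne (ne_of_mem_of_not_mem hx hg.s_notMem_varsOf)
    (ne_of_mem_of_not_mem hx hg.t_notMem_varsOf) (ne_of_mem_of_not_mem hx hg.f_notMem_varsOf)

lemma Fresh.pinGuards_apply_of_mem (hg : Fresh φ H q s t f) {x : ℕ} (hx : x ∈ H) :
    pinGuards s t f b v x = v x :=
  pinGuards_apply_of_ne (ne_of_mem_of_not_mem hx hg.s_notMem_H)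
    (ne_of_mem_of_not_mem hx hg.t_notMem_H) (ne_of_mem_of_not_mem hx hg.f_notMem_H)

end pinGuards

lemma models_pinGuards_iff (hg : Fresh φ H q s t f) {Φ : Set (PropForm ℕ)}
    (hΦ : Φ ⊆ delta φ H s q t f) (b : Bool) (v : ℕ → Bool) :
    Models Φ (pinGuards s t f b v) ↔ (φ ∈ Φ → φ.eval v = true) ∧
      ((var s).iff (var q) ∈ Φ → b = v q) ∧ ∀ l ∈ clause t f ⁻¹' Φ, v l.1 = l.2 := by
  have hφ : φ.eval (pinGuards s t f b v) = φ.eval v :=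
    PropForm.eval_congr fun _ hx => hg.pinGuards_apply_of_mem_varsOf hx
  have hq : pinGuards s t f b v q = v q :=
    pinGuards_apply_of_ne hg.s_ne_q.symm hg.t_ne_q.symm hg.f_ne_q.symm
  have hcl : ∀ l ∈ clause t f ⁻¹' Φ,
      (clause t f l).eval (pinGuards s t f b v) = true ↔ v l.1 = l.2 := by
    intro l hl
    have hH := fst_mem_of_clause_mem_delta hg.t_notMem_varsOf hg.f_notMem_varsOf (hΦ hl)
    rw [eval_clause_iff (pinGuards_apply_t hg.s_ne_t) (pinGuards_apply_f hg.s_ne_f hg.t_ne_f),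
      hg.pinGuards_apply_of_mem hH]
  rw [models_iff_of_subset_delta hΦ, hφ, pinGuards_apply_s, hq]
  exact and_congr_right' (and_congr_right' (forall₂_congr hcl))

lemma entails_alpha_iff (hg : Fresh φ H q s t f) {Φ : Set (PropForm ℕ)}
    (hΦ : Φ ⊆ delta φ H s q t f) :
    Entails Φ (alpha s t f) ↔ ∀ v : ℕ → Bool, (φ ∈ Φ → φ.eval v = true) →
      (∀ l ∈ clause t f ⁻¹' Φ, v l.1 = l.2) → (var s).iff (var q) ∈ Φ ∧ v q = true := by
  constructor
  · intro h v hφ hcl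
    by_contra hcon
    have hmod := (models_pinGuards_iff hg hΦ false v).2
      ⟨hφ, fun hψ => by simpa [hψ] using hcon, hcl⟩
    simpa [eval_pinGuards_alpha hg.s_ne_t hg.s_ne_f hg.t_ne_f] using h _ hmod
  · intro h w hw
    by_contra hα
    obtain ⟨hs, ht, hf⟩ : w s = false ∧ w t = true ∧ w f = false := by
      simpa [alpha, PropForm.eval] using hα
    rw [← pinGuards_eq_self hs ht hf, models_pinGuards_iff hg hΦ] at hw
    obtain ⟨hφ, hψ, hcl⟩ := hw
    obtain ⟨hψΦ, hq⟩ := h w hφ hcl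
    simp [← hψ hψΦ] at hq

def Explains (φ : PropForm ℕ) (q : ℕ) (E : Finset (ℕ × Bool)) : Prop :=
  ∀ v : ℕ → Bool, φ.eval v = true → (∀ l ∈ E, v l.1 = l.2) → v q = true

def supportOf (φ : PropForm ℕ) (s q t f : ℕ) (E : Finset (ℕ × Bool)) : Set (PropForm ℕ) :=
  insert φ (insert ((var s).iff (var q)) (clause t f '' E))

section supportOf

variable {E : Finset (ℕ × Bool)}

lemma supportOf_subset_delta (hEH : ∀ l ∈ E, l.1 ∈ H) :
    supportOf φ s q t f E ⊆ delta φ H s q t f := by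
  rintro χ (rfl | rfl | ⟨l, hl, rfl⟩)
  exacts [mem_delta.2 (.inl rfl), mem_delta.2 (.inr (.inl rfl)),
    mem_delta.2 (.inr (.inr ⟨l, hEH l hl, rfl⟩))]

lemma clause_mem_supportOf_iff (ht : t ∉ varsOf φ) (hf : f ∉ varsOf φ) {l : ℕ × Bool} :
    clause t f l ∈ supportOf φ s q t f E ↔ l ∈ E := by
  simp [supportOf, clause_ne_of_notMem_varsOf ht hf, clause_ne_iff, clause_injective.eq_iff]

lemma consistent_supportOf (hg : Fresh φ H q s t f) (hEH : ∀ l ∈ E, l.1 ∈ H) {v₀ : ℕ → Bool}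
    (hv₀φ : φ.eval v₀ = true) (hv₀E : ∀ l ∈ E, v₀ l.1 = l.2) :
    Consistent (supportOf φ s q t f E) :=
  ⟨pinGuards s t f (v₀ q) v₀, (models_pinGuards_iff hg (supportOf_subset_delta hEH) _ _).2
    ⟨fun _ => hv₀φ, fun _ => rfl,
      fun _ hl => hv₀E _ ((clause_mem_supportOf_iff hg.t_notMem_varsOf hg.f_notMem_varsOf).1 hl)⟩⟩

lemma entails_alpha_supportOf (hg : Fresh φ H q s t f) (hEH : ∀ l ∈ E, l.1 ∈ H)
    (hE : Explains φ q E) : Entails (supportOf φ s q t f E) (alpha s t f) := by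
  rw [entails_alpha_iff hg (supportOf_subset_delta hEH)]
  intro v hφ hcl
  refine ⟨by simp [supportOf], hE v (hφ (by simp [supportOf])) fun l hl => hcl l ?_⟩
  exact (clause_mem_supportOf_iff hg.t_notMem_varsOf hg.f_notMem_varsOf).2 hl

lemma not_entails_alpha_of_ssubset_supportOf (hg : Fresh φ H q s t f) (hq : q ∉ H)
    (hEH : ∀ l ∈ E, l.1 ∈ H) {v₀ : ℕ → Bool} (hv₀φ : φ.eval v₀ = true)
    (hv₀E : ∀ l ∈ E, v₀ l.1 = l.2) (hmin : Minimal (Explains φ q) E) {Φ' : Set (PropForm ℕ)}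
    (hΦ' : Φ' ⊂ supportOf φ s q t f E) : ¬ Entails Φ' (alpha s t f) := by
  have hlits : ∀ l ∈ clause t f ⁻¹' Φ', l ∈ E := fun _ hl =>
    (clause_mem_supportOf_iff hg.t_notMem_varsOf hg.f_notMem_varsOf).1 (hΦ'.subset hl)
  rw [entails_alpha_iff hg (hΦ'.subset.trans (supportOf_subset_delta hEH))]
  intro h
  obtain ⟨χ, hχ, hχ'⟩ := Set.exists_of_ssubset hΦ'
  rcases hχ with rfl | rfl | ⟨l, hl, rfl⟩
  · have hq' := (h (Function.update v₀ q false) (absurd · hχ') fun l hl => ?_).2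
    · simp at hq'
    · rw [Function.update_of_ne (ne_of_mem_of_not_mem (hEH l (hlits l hl)) hq)]
      exact hv₀E l (hlits l hl)
  · exact hχ' (h v₀ (fun _ => hv₀φ) fun l hl => hv₀E l (hlits l hl)).1
  · obtain ⟨v, hvφ, hvE, hvq⟩ : ∃ v : ℕ → Bool, φ.eval v = true ∧
        (∀ l' ∈ E.erase l, v l'.1 = l'.2) ∧ v q ≠ true := by
      simpa [Explains] using hmin.not_prop_of_lt (Finset.erase_ssubset hl)
    refine hvq (h v (fun _ => hvφ) fun l' hl' => hvE l' (Finset.mem_erase.2 ⟨?_, hlits l' hl'⟩)).2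
    rintro rfl
    exact hχ' hl'

end supportOf

open Classical in
noncomputable def litsOf (H : Finset ℕ) (t f : ℕ) (Φ : Set (PropForm ℕ)) : Finset (ℕ × Bool) :=
  (H ×ˢ Finset.univ).filter (clause t f · ∈ Φ)

section litsOf

variable {Φ : Set (PropForm ℕ)}

lemma mem_litsOf (ht : t ∉ varsOf φ) (hf : f ∉ varsOf φ) (hΦ : Φ ⊆ delta φ H s q t f)
    {l : ℕ × Bool} : l ∈ litsOf H t f Φ ↔ clause t f l ∈ Φ := by
  simp only [litsOf, Finset.mem_filter, Finset.mem_product, Finset.mem_univ, and_true,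
    and_iff_right_iff_imp]
  exact fun hl => fst_mem_of_clause_mem_delta ht hf (hΦ hl)

-- By resolution, `(h ∨ ¬t)` and `(¬h ∨ f)` alone entail `α`.
lemma not_complementary_of_minimal (hψ : (var s).iff (var q) ∈ Φ)
    (hmin : ∀ Φ' ⊂ Φ, ¬ Entails Φ' (alpha s t f)) (h : ℕ) (htrue : clause t f (h, true) ∈ Φ) :
    clause t f (h, false) ∉ Φ := by
  intro hfalse
  refine hmin {clause t f (h, true), clause t f (h, false)} ?_ fun v hv => ?_
  · refine (Set.ssubset_iff_of_subset (Set.insert_subset htrue (by simpa))).2 ⟨_, hψ, ?_⟩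
    simp [(clause_ne_iff _ _ _).symm]
  · have htrue' := hv _ (.inl rfl)
    have hfalse' := hv _ (.inr rfl)
    simp only [clause, alpha, PropForm.eval] at htrue' hfalse' ⊢
    cases hh : v h <;> simp_all

open Classical in
lemma phi_mem_of_minimal (hg : Fresh φ H q s t f) (hq : q ∉ H) (hΦ : Φ ⊆ delta φ H s q t f)
    (hψ : (var s).iff (var q) ∈ Φ) (hent : Entails Φ (alpha s t f))
    (hmin : ∀ Φ' ⊂ Φ, ¬ Entails Φ' (alpha s t f)) : φ ∈ Φ := by
  by_contra hφ
  rw [entails_alpha_iff hg hΦ] at hent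
  have hq' := (hent (fun y => decide (clause t f (y, true) ∈ Φ)) (absurd · hφ) ?_).2
  · exact hq (fst_mem_of_clause_mem_delta hg.t_notMem_varsOf hg.f_notMem_varsOf
      (hΦ (of_decide_eq_true hq')))
  · rintro ⟨h, _ | _⟩ hl
    · simpa using (not_complementary_of_minimal hψ hmin h · hl)
    · simpa using hl

lemma exists_model_of_minimal (hg : Fresh φ H q s t f) (hΦ : Φ ⊆ delta φ H s q t f)
    (hφ : φ ∈ Φ) (hψ : (var s).iff (var q) ∈ Φ) (hmin : ∀ Φ' ⊂ Φ, ¬ Entails Φ' (alpha s t f)) :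
    ∃ v : ℕ → Bool, φ.eval v = true ∧ ∀ l ∈ clause t f ⁻¹' Φ, v l.1 = l.2 := by
  have h := hmin _ (Set.sdiff_singleton_ssubset.2 hψ)
  rw [entails_alpha_iff hg (Set.sdiff_subset.trans hΦ)] at h
  push Not at h
  obtain ⟨v, hvφ, hvcl, -⟩ := h
  have hφψ : φ ≠ (var s).iff (var q) := fun h =>
    hg.s_notMem_varsOf (by simp [h, PropForm.iff, varsOf])
  exact ⟨v, hvφ ⟨hφ, hφψ⟩, fun l hl => hvcl l ⟨hl, clause_ne_iff l _ _⟩⟩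

end litsOf

end AbductionToRelevance

open AbductionToRelevance in
theorem stmt17_general (φ : PropForm ℕ) (H : Finset ℕ) (q s t f : ℕ)
    (hq : q ∉ H)
    (hs : s ∉ varsOf φ) (ht : t ∉ varsOf φ) (hf : f ∉ varsOf φ)
    (hsH : s ∉ H) (htH : t ∉ H) (hfH : f ∉ H)
    (hst : s ≠ t) (hsf : s ≠ f) (htf : t ≠ f)
    (hsq : s ≠ q) (htq : t ≠ q) (hfq : f ≠ q) :
    (∃ E : Finset (ℕ × Bool), (∀ l ∈ E, l.1 ∈ H) ∧
        (∃ v : ℕ → Bool, PropForm.eval v φ = true ∧ ∀ l ∈ E, v l.1 = l.2) ∧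
        (∀ v : ℕ → Bool, PropForm.eval v φ = true → (∀ l ∈ E, v l.1 = l.2) → v q = true))
    ↔ (∃ Φ : Set (PropForm ℕ),
        Φ ⊆ ({χ | ∃ h ∈ H, χ = PropForm.or (.var h) (.not (.var t))}
             ∪ {χ | ∃ h ∈ H, χ = PropForm.or (.not (.var h)) (.var f)}
             ∪ {φ, PropForm.or (.and (.var s) (.var q)) (.and (.not (.var s)) (.not (.var q)))}) ∧
        (PropForm.or (.and (.var s) (.var q)) (.and (.not (.var s)) (.not (.var q)))) ∈ Φ ∧
        Consistent Φ ∧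
        Entails Φ (PropForm.or (.var s) (.or (.not (.var t)) (.var f))) ∧
        ∀ Φ' ⊂ Φ, ¬ Entails Φ' (PropForm.or (.var s) (.or (.not (.var t)) (.var f)))) := by
  have hg : Fresh φ H q s t f := ⟨hs, ht, hf, hsH, htH, hfH, hst, hsf, htf, hsq, htq, hfq⟩
  constructor
  · rintro ⟨E₀, hE₀H, ⟨v₀, hv₀φ, hv₀E₀⟩, hE₀⟩
    obtain ⟨E, hEE₀, hE⟩ := exists_minimal_le_of_wellFoundedLT (Explains φ q) E₀ hE₀
    have hEH : ∀ l ∈ E, l.1 ∈ H := fun l hl => hE₀H l (hEE₀ hl)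
    have hv₀E : ∀ l ∈ E, v₀ l.1 = l.2 := fun l hl => hv₀E₀ l (hEE₀ hl)
    exact ⟨supportOf φ s q t f E, supportOf_subset_delta hEH,
      Set.mem_insert_of_mem _ (Set.mem_insert _ _), consistent_supportOf hg hEH hv₀φ hv₀E,
      entails_alpha_supportOf hg hEH hE.prop,
      fun _ => not_entails_alpha_of_ssubset_supportOf hg hq hEH hv₀φ hv₀E hE⟩
  · rintro ⟨Φ, hΦ, hψ, -, hent, hmin⟩
    have hφ := phi_mem_of_minimal hg hq hΦ hψ hent hmin
    have hlits : ∀ {l}, l ∈ litsOf H t f Φ ↔ clause t f l ∈ Φ := mem_litsOf ht hf hΦ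
    obtain ⟨v, hvφ, hvE⟩ := exists_model_of_minimal hg hΦ hφ hψ hmin
    refine ⟨litsOf H t f Φ, fun l hl => fst_mem_of_clause_mem_delta ht hf (hΦ (hlits.1 hl)),
      ⟨v, hvφ, fun l hl => hvE l (hlits.1 hl)⟩, fun w hwφ hwE => ?_⟩
    exact ((entails_alpha_iff hg hΦ).1 hent w (fun _ => hwφ) fun l hl => hwE l (hlits.2 hl)).2

/-- Reduction from positive-literals-unrestricted abduction to argument relevance:
with `ψ = (s ↔ q)`, `Δ = {(h ∨ ¬t), (¬h ∨ f) : h ∈ H} ∪ {φ, ψ}` and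
`α = (s ∨ ¬t ∨ f)`, and `φ` both 0-valid and 1-valid, there is an explanation `E`
of literals over `H` iff there is a minimal support `Φ ⊆ Δ` for `α` with `ψ ∈ Φ`. -/
theorem stmt17 (φ : PropForm ℕ) (H : Finset ℕ) (q s t f : ℕ)
    (hH : H ⊆ varsOf φ) (hq : q ∉ H)
    (hs : s ∉ varsOf φ) (ht : t ∉ varsOf φ) (hf : f ∉ varsOf φ)
    (hsH : s ∉ H) (htH : t ∉ H) (hfH : f ∉ H)
    (hst : s ≠ t) (hsf : s ≠ f) (htf : t ≠ f)
    (hsq : s ≠ q) (htq : t ≠ q) (hfq : f ≠ q)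
    (h0 : PropForm.eval (fun _ => false) φ = true)
    (h1 : PropForm.eval (fun _ => true) φ = true) :
    (∃ E : Finset (ℕ × Bool), (∀ l ∈ E, l.1 ∈ H) ∧
        (∃ v : ℕ → Bool, PropForm.eval v φ = true ∧ ∀ l ∈ E, v l.1 = l.2) ∧
        (∀ v : ℕ → Bool, PropForm.eval v φ = true → (∀ l ∈ E, v l.1 = l.2) → v q = true))
    ↔ (∃ Φ : Set (PropForm ℕ),
        Φ ⊆ ({χ | ∃ h ∈ H, χ = PropForm.or (.var h) (.not (.var t))}
             ∪ {χ | ∃ h ∈ H, χ = PropForm.or (.not (.var h)) (.var f)}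
             ∪ {φ, PropForm.or (.and (.var s) (.var q)) (.and (.not (.var s)) (.not (.var q)))}) ∧
        (PropForm.or (.and (.var s) (.var q)) (.and (.not (.var s)) (.not (.var q)))) ∈ Φ ∧
        Consistent Φ ∧
        Entails Φ (PropForm.or (.var s) (.or (.not (.var t)) (.var f))) ∧
        ∀ Φ' ⊂ Φ, ¬ Entails Φ' (PropForm.or (.var s) (.or (.not (.var t)) (.var f)))) :=
  stmt17_general φ H q s t f hq hs ht hf hsH htH hfH hst hsf htf hsq htq hfq
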